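/- Let S be a monoid such that the class of strongly flat left S-acts is closed under ultraproducts (for every set I, every family (B_i)_{i∈I} of strongly flat left S-acts and every ultrafilter Φ on I, the ultraproduct (∏_{i∈I} B_i)/Φ is strongly flat), and suppose S satisfies Condition (A). Then S satisfies condition (CFRS): for every s ∈ S there exists n ∈ ℕ such that for all t ∈ S the set {x ∈ S | sx = t} has at most n elements. -/
import Mathlib


universe u

/-- Condition (P) for a left `S`-act `B`. -/
def CondP (S : Type u) [Monoid S] (B : Type u) [MulAction S B] : Prop :=
  ∀ (s t : S) (x y : B), s • x = t • y →
    ∃ (z : B) (s' t' : S), x = s' • z ∧ y = t' • z ∧ s * s' = t * t'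

/-- Condition (E) for a left `S`-act `B`. -/
def CondE (S : Type u) [Monoid S] (B : Type u) [MulAction S B] : Prop :=
  ∀ (s t : S) (x : B), s • x = t • x →
    ∃ (z : B) (s' : S), x = s' • z ∧ s * s' = t * s'

/-- A left `S`-act is strongly flat if it satisfies conditions (P) and (E). -/
def StronglyFlat (S : Type u) [Monoid S] (B : Type u) [MulAction S B] : Prop :=
  CondP S B ∧ CondE S B

/-- The equivalence `f ≡ g` iff `{i | f i = g i} ∈ Φ` on `∀ i, B i`. -/
def ultraSetoid {I : Type u} (Φ : Ultrafilter I) (B : I → Type u) :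
    Setoid (∀ i, B i) where
  r f g := {i | f i = g i} ∈ (Φ : Filter I)
  iseqv := by
    constructor
    · intro f
      have h : {i | f i = f i} = Set.univ := by ext i; simp
      rw [h]; exact Filter.univ_mem
    · intro f g h
      exact Filter.mem_of_superset h fun i hi => Eq.symm hi
    · intro f g k h1 h2
      exact Filter.mem_of_superset (Filter.inter_mem h1 h2) fun i hi => hi.1.trans hi.2

/-- The ultraproduct `(∏ᵢ B i)/Φ`. -/
def Ultraproduct {I : Type u} (Φ : Ultrafilter I) (B : I → Type u) : Type u :=
  Quotient (ultraSetoid Φ B)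

instance Ultraproduct.instMulAction {S : Type u} [Monoid S] {I : Type u}
    (Φ : Ultrafilter I) (B : I → Type u) [∀ i, MulAction S (B i)] :
    MulAction S (Ultraproduct Φ B) where
  smul s := Quotient.map (fun f i => s • f i)
    (fun f g h => Filter.mem_of_superset h fun i hi => congrArg (fun y => s • y) hi)
  one_smul x := Quotient.inductionOn x fun f =>
    Quotient.sound (Filter.univ_mem' fun i => one_smul S (f i))
  mul_smul s t x := Quotient.inductionOn x fun f =>
    Quotient.sound (Filter.univ_mem' fun i => mul_smul s t (f i))

/-- Any monoid is strongly flat as a left act over itself. -/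
theorem stronglyFlat_self (S : Type u) [Monoid S] : StronglyFlat S S := by
  constructor
  · intro s t x y h
    exact ⟨1, x, y, by simp, by simp, by simpa using h⟩
  · intro s t x h
    exact ⟨1, x, by simp, by simpa using h⟩

/-- If a set has at least `Fintype.card β` elements, there is an injection of `β` into it. -/
theorem exists_inj_into {α : Type v} (β : Type w) [Fintype β] {A : Set α}
    (h : (Fintype.card β : ℕ∞) ≤ A.encard) :
    ∃ ι : β → α, Function.Injective ι ∧ ∀ b, ι b ∈ A := by
  obtain ⟨B, hBA, hB⟩ := Set.exists_subset_encard_eq h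
  have hfin : B.Finite := Set.finite_of_encard_eq_coe hB
  haveI := hfin.fintype
  have hcard : Fintype.card β = Fintype.card B := by
    rw [Set.encard_eq_coe_toFinset_card B] at hB
    have h2 : B.toFinset.card = Fintype.card β := by exact_mod_cast hB
    rw [← h2, Set.toFinset_card]
  let e := Fintype.equivOfCardEq hcard
  exact ⟨fun b => (e b : α), fun b b' hb => e.injective (Subtype.val_injective hb),
    fun b => hBA (e b).2⟩

/-- if the class of strongly flat left `S`-acts is closed under
ultraproducts and `S` satisfies Condition (A), then `S` satisfies (CFRS):
for every `s` there is a uniform finite bound `n` on the number of solutions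
`x` of `s * x = t`. -/
theorem stmt_14 {S : Type u} [Monoid S]
    (hclosed : ∀ (I : Type u) (Φ : Ultrafilter I) (B : I → Type u)
      [∀ i, MulAction S (B i)],
      (∀ i, StronglyFlat S (B i)) → StronglyFlat S (Ultraproduct Φ B))
    (hA : ∀ (A : Type u) [MulAction S A] (a : ℕ → A),
      (∀ n : ℕ, Set.range (fun s : S => s • a n) ⊆ Set.range (fun s : S => s • a (n + 1))) →
      ∃ N : ℕ, ∀ n ≥ N, Set.range (fun s : S => s • a n) = Set.range (fun s : S => s • a N)) :
    ∀ s : S, ∃ n : ℕ, ∀ t : S, {x : S | s * x = t}.encard ≤ (n : ℕ∞) := by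
  classical
  intro s
  by_contra hno
  push_neg at hno
  choose T hT using hno
  -- The index set: finite subsets of S, with an ultrafilter refining `atTop`.
  haveI : Nonempty (Finset S) := ⟨∅⟩
  let Φ : Ultrafilter (Finset S) := Ultrafilter.of Filter.atTop
  have hΦa : ∀ a : S, {F : Finset S | a ∈ F} ∈ Φ := by
    intro a
    apply Ultrafilter.of_le Filter.atTop
    exact Filter.mem_of_superset (Filter.mem_atTop ({a} : Finset S))
      (fun F hF => Finset.singleton_subset_iff.mp (Finset.le_iff_subset.mp hF))
  set B : Finset S → Type u := fun _ => S with hB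
  have hSF := hclosed (Finset S) Φ B (fun _ => stronglyFlat_self S)
  let mk : (∀ i : Finset S, B i) → Ultraproduct Φ B := Quotient.mk (ultraSetoid Φ B)
  have hsmul : ∀ (r : S) (f : ∀ i : Finset S, B i), r • mk f = mk (fun i => r • f i) :=
    fun r f => rfl
  -- for each finite F ⊆ S, an injection of (F → Bool) into the solution set of
  -- s * x = T (2 ^ F.card)
  have hex : ∀ F : Finset S, ∃ ι : ({x // x ∈ F} → Bool) → S,
      Function.Injective ι ∧ ∀ b, ι b ∈ {x : S | s * x = T (2 ^ F.card)} := by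
    intro F
    apply exists_inj_into
    refine le_of_lt (lt_of_le_of_lt ?_ (hT (2 ^ F.card)))
    have : Fintype.card ({x // x ∈ F} → Bool) = 2 ^ F.card := by
      rw [Fintype.card_fun, Fintype.card_bool, Fintype.card_coe]
    rw [this]
  choose ι hιinj hιsol using hex
  -- the target element and the big family of solutions
  let τ : Ultraproduct Φ B := mk (fun F => T (2 ^ F.card))
  let ξ : (S → Bool) → Ultraproduct Φ B := fun g => mk (fun F => ι F (fun a => g ↑a))
  have hξτ : ∀ g, s • ξ g = τ := by
    intro g
    show s • mk _ = mk _
    rw [hsmul]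
    apply Quotient.sound
    apply Filter.univ_mem'
    intro F
    show s • ι F (fun a => g ↑a) = T (2 ^ F.card)
    rw [smul_eq_mul]
    exact hιsol F _
  have hξinj : Function.Injective ξ := by
    intro g g' h
    by_contra hne
    rw [funext_iff] at hne
    push_neg at hne
    obtain ⟨a, ha⟩ := hne
    have hmem : {F : Finset S | ι F (fun b => g ↑b) = ι F (fun b => g' ↑b)} ∈ Φ :=
      Quotient.exact h
    obtain ⟨F, hF1, hF2⟩ := Filter.nonempty_of_mem (Filter.inter_mem hmem (hΦa a))
    have := congrFun (hιinj F hF1) ⟨a, hF2⟩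
    exact ha this
  -- the family of "lower bounds"
  set SC : Ultraproduct Φ B → Set (Ultraproduct Φ B) :=
    fun z => Set.range (fun u : S => u • z) with hSC
  set C : Set (Ultraproduct Φ B) := {z | ∃ u : S, (s * u) • z = τ} with hC
  have hCξ : ∀ g, ξ g ∈ C := fun g => ⟨1, by rw [mul_one]; exact hξτ g⟩
  have hdir : ∀ z₁ ∈ C, ∀ z₂ ∈ C, ∃ w ∈ C, SC z₁ ⊆ SC w ∧ SC z₂ ⊆ SC w := by
    rintro z₁ ⟨u₁, h₁⟩ z₂ ⟨u₂, h₂⟩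
    obtain ⟨w, a, b, hz₁, hz₂, hab⟩ := hSF.1 (s * u₁) (s * u₂) z₁ z₂ (h₁.trans h₂.symm)
    refine ⟨w, ⟨u₁ * a, ?_⟩, ?_, ?_⟩
    · rw [← mul_assoc, mul_smul, ← hz₁]; exact h₁
    · rintro _ ⟨v, rfl⟩; exact ⟨v * a, by show (v * a) • w = v • z₁; rw [mul_smul, ← hz₁]⟩
    · rintro _ ⟨v, rfl⟩; exact ⟨v * b, by show (v * b) • w = v • z₂; rw [mul_smul, ← hz₂]⟩
  -- a maximal cyclic subact among those indexed by C, using condition (A)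
  have hmax : ∃ z ∈ C, ∀ z' ∈ C, SC z ⊆ SC z' → SC z' = SC z := by
    by_contra hnm
    push_neg at hnm
    choose nxt hnxtC hnxtsub hnxtne using hnm
    let step : {z // z ∈ C} → {z // z ∈ C} := fun p => ⟨nxt p.1 p.2, hnxtC p.1 p.2⟩
    let seq : ℕ → {z // z ∈ C} := fun n => step^[n] ⟨ξ (fun _ => false), hCξ (fun _ => false)⟩
    have hstep : ∀ n, seq (n + 1) = step (seq n) := fun n =>
      Function.iterate_succ_apply' step n _
    obtain ⟨N, hN⟩ := hA (Ultraproduct Φ B) (fun n => (seq n).1) (by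
      intro n
      show SC (seq n).1 ⊆ SC (seq (n + 1)).1
      rw [hstep]
      exact hnxtsub (seq n).1 (seq n).2)
    have h1 : SC (seq (N + 1)).1 = SC (seq N).1 := hN (N + 1) (by omega)
    rw [hstep] at h1
    exact hnxtne (seq N).1 (seq N).2 h1
  obtain ⟨zm, hzmC, hzmax⟩ := hmax
  -- every ξ g lies in the single cyclic subact SC zm
  have hSolSub : ∀ g, ξ g ∈ SC zm := by
    intro g
    obtain ⟨w, hwC, h1, h2⟩ := hdir (ξ g) (hCξ g) zm hzmC
    rw [← hzmax w hwC h2]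
    exact h1 ⟨1, one_smul S (ξ g)⟩
  choose U hU using hSolSub
  have hUinj : Function.Injective U := fun g g' h =>
    hξinj (by rw [← hU g, ← hU g', h])
  -- Cantor's theorem gives the contradiction
  apply Function.cantor_injective (fun A : Set S => U (fun x => if x ∈ A then true else false))
  intro A A' hAA'
  have := hUinj hAA'
  ext x
  have hx := congrFun this x
  constructor
  · intro hxA
    by_contra hxA'
    rw [if_pos hxA, if_neg hxA'] at hx
    exact Bool.noConfusion hx
  · intro hxA'
    by_contra hxA
    rw [if_neg hxA, if_pos hxA'] at hx
    exact Bool.noConfusion hx
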